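/- Let f : R → K be continuous, B a ball in R, and S a ball in K. If Φ_1 f(r, r_-) ∈ S for every r ∈ ℛ_+ with r ∈ B and r_- ∈ B, then Φ_1 f(x,y) ∈ S for all distinct x, y ∈ B. -/

import Mathlib

/-!
Put `g z = f z - c * z`; the hypothesis says `‖g r - g r₋‖ < ε ‖r - r₋‖`, the conclusion
`‖g x - g y‖ < ε ‖x - y‖`. If `‖x - y‖ = ‖π‖ ^ m₀`, then `x` and `y` have the same truncation
`x_{m₀} = y_{m₀}`. Along the truncations `z_{m₀}, z_{m₀+1}, …` of `z ∈ {x, y}` every step is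
either trivial or a pair `(r₋, r)` with `r ∈ ℛ₊`, `‖r - r₋‖ ≤ ‖π‖ ^ m₀`, inside `B`. The
ultrametric inequality bounds `‖g z_m - g z_{m₀}‖` uniformly in `m`, and continuity of `g` passes
the strict bound to the limit `z`.
-/

open scoped ENNReal NNReal
open Filter Topology

noncomputable section

namespace DSW

variable {K : Type*} [NontriviallyNormedField K] [CompleteSpace K] [IsUltrametricDist K]

/-- The ring of integers `R = {x : K | ‖x‖ ≤ 1}`, as a subset of `K`. -/
def Rint (K : Type*) [NontriviallyNormedField K] : Set K := {x : K | ‖x‖ ≤ 1}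

/-- `∇ⁿR`: the set of tuples of pairwise distinct elements of `R`. -/
def nabla (K : Type*) [NontriviallyNormedField K] (n : ℕ) : Set (Fin n → K) :=
  {x | (∀ i, ‖x i‖ ≤ 1) ∧ Function.Injective x}

/-- The `n`-th difference quotient `Φₙ f`. -/
def Phi (f : K → K) : ∀ n : ℕ, (Fin (n + 1) → K) → K
  | 0, x => f (x 0)
  | n + 1, x =>
      (Phi f n (Fin.cons (x 0) fun i => x i.succ.succ) -
        Phi f n (Fin.cons (x 1) fun i => x i.succ.succ)) / (x 0 - x 1)

/-- `f` is a `Cⁿ`-function: `Φₙ f` extends to a continuous function on `R^(n+1)`. -/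
def IsCn (f : K → K) (n : ℕ) : Prop :=
  ∃ g : (Fin (n + 1) → K) → K,
    ContinuousOn g {x | ∀ i, ‖x i‖ ≤ 1} ∧
      ∀ x : Fin (n + 1) → K, (∀ i, ‖x i‖ ≤ 1) → Function.Injective x → g x = Phi f n x

/-- `Dₙ f a = Φₙ f (a, …, a)`, defined (for `n ≥ 1`) as the limit of `Φₙ f` at the
diagonal point `(a, …, a)`, and `D₀ f = f`. -/
def Dq (f : K → K) : ℕ → K → K
  | 0 => f
  | n + 1 => fun a =>
      limUnder (𝓝[{x : Fin (n + 2) → K | Function.Injective x}] fun _ => a) (Phi f (n + 1))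

/-- `ψⱼ f (x, y) = (f x − f y − ∑_{l=1}^{j} (x−y)^l Dₗf y) / (x−y)^(j+1)`. -/
def psi (f : K → K) (j : ℕ) (x y : K) : K :=
  (f x - f y - ∑ l ∈ Finset.Icc 1 j, (x - y) ^ l * Dq f l y) / (x - y) ^ (j + 1)

variable (π : K) (𝒯 : Set K)

/-- `ℛₘ`: the set of sums `∑_{i<m} aᵢ πⁱ` with digits in `𝒯`. -/
def Rm (m : ℕ) : Set K :=
  {x | ∃ a : Fin m → K, (∀ i, a i ∈ 𝒯) ∧ x = ∑ i, a i * π ^ (i : ℕ)}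

/-- `ℛ = ⋃ₘ ℛₘ`. -/
def RR : Set K := ⋃ m, Rm π 𝒯 m

/-- `ℛ₊ = ℛ \ {0}`. -/
def RPlus : Set K := RR π 𝒯 \ {0}

/-- The length `l(r)`: the least `m` with `r ∈ ℛₘ`. -/
def len (r : K) : ℕ := sInf {m | r ∈ Rm π 𝒯 m}

/-- `χ_r`: characteristic function of the disk `{x : ‖x − r‖ ≤ ‖π‖^(l r)}`. -/
def chi (r x : K) : K := if ‖x - r‖ ≤ ‖π‖ ^ len π 𝒯 r then 1 else 0

/-- The truncation `x_m`: the unique element of `ℛₘ` with `‖x − x_m‖ ≤ ‖π‖^m`. -/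
def trunc (x : K) (m : ℕ) : K :=
  Classical.epsilon fun s => s ∈ Rm π 𝒯 m ∧ ‖x - s‖ ≤ ‖π‖ ^ m

/-- `r₋`: the truncation of `r` dropping the top digit. -/
def rminus (r : K) : K := trunc π 𝒯 r (len π 𝒯 r - 1)

open Classical in
/-- `γ_r = 1` if `r = 0`, `γ_r = r − r₋` otherwise. -/
def gamma (r : K) : K := if r = 0 then 1 else r - rminus π 𝒯 r

open Classical in
/-- The wavelet coefficients `b_r(f)` of a continuous function. -/
def b0 (f : K → K) (r : K) : K := if r = 0 then f 0 else f r - f (rminus π 𝒯 r)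

/-- `c` is the coefficient family of the expansion of `f` with respect to the wavelet
basis `{γ_r^(n−j) (x − r)^j χ_r(x) : r ∈ ℛ, 0 ≤ j ≤ n}` of `Cⁿ(R, K)`. -/
def IsExpansion (n : ℕ) (f : K → K) (c : K → ℕ → K) : Prop :=
  ∀ x ∈ Rint K, HasSum
    (fun p : RR π 𝒯 × Fin (n + 1) =>
      c ↑p.1 ↑p.2 * gamma π 𝒯 ↑p.1 ^ (n - (p.2 : ℕ)) * (x - ↑p.1) ^ (p.2 : ℕ) *
        chi π 𝒯 ↑p.1 x)
    (f x)

/-- The coefficients `b_r^{n,j}(f)` of the expansion of `f ∈ Cⁿ(R,K)`. -/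
def bcoef (n : ℕ) (f : K → K) : K → ℕ → K := Classical.epsilon (IsExpansion π 𝒯 n f)

/-- The norm `|f|_n` on `Cⁿ(R, K)`, with values in `ℝ≥0∞`; `|f|_0` is the sup norm and
`|f|_(n+1) = sup_{r ∈ ℛ} max_{0 ≤ j ≤ n} |b_r^{n,j}(f) γ_r⁻¹|`. -/
def CnNorm : ℕ → (K → K) → ℝ≥0∞
  | 0, f => ⨆ x : Rint K, (‖f ↑x‖₊ : ℝ≥0∞)
  | n + 1, f =>
      ⨆ r : RR π 𝒯, ⨆ j : Fin (n + 1),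
        (‖bcoef π 𝒯 n f ↑r ↑j * (gamma π 𝒯 ↑r)⁻¹‖₊ : ℝ≥0∞)

/-- `K` is a local field with uniformizer `π`, residue field of cardinality `q`, and
set of residue representatives `𝒯` (containing `0`). -/
structure LocalFieldData (π : K) (𝒯 : Set K) (q : ℕ) : Prop where
  one_lt_q : 1 < q
  norm_pi : ‖π‖ = (q : ℝ)⁻¹
  norm_discrete : ∀ x : K, x ≠ 0 → ∃ n : ℤ, ‖x‖ = ‖π‖ ^ n
  rep_subset : 𝒯 ⊆ Rint K
  zero_mem : (0 : K) ∈ 𝒯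
  finite_rep : 𝒯.Finite
  card_rep : Nat.card 𝒯 = q
  rep_unique : ∀ x : K, ‖x‖ ≤ 1 → ∃! t, t ∈ 𝒯 ∧ ‖x - t‖ < 1


/-- The norm `|f|₁ = sup_{r ∈ ℛ} |b_r(f) γ_r⁻¹|` on `C¹(R, K)`. -/
def wnorm1 (f : K → K) : ℝ≥0∞ :=
  ⨆ r : RR π 𝒯, (‖b0 π 𝒯 f ↑r * (gamma π 𝒯 ↑r)⁻¹‖₊ : ℝ≥0∞)

/-- The `Cⁿ`-antiderivation `Pₙ f (x) = ∑_{j<n} ∑_m f⁽ʲ⁾(x_m)/(j+1)! (x_{m+1} − x_m)^(j+1)`. -/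
def Pn (n : ℕ) (f : K → K) (x : K) : K :=
  ∑ j ∈ Finset.range n, ∑' m : ℕ,
    iteratedDeriv j f (trunc π 𝒯 x m) / (((j + 1).factorial : ℕ) : K) *
      (trunc π 𝒯 x (m + 1) - trunc π 𝒯 x m) ^ (j + 1)

/-- `Pₙ ∘ Pₙ₋₁ ∘ ⋯ ∘ P₁`. -/
def Tnaux : ℕ → (K → K) → K → K
  | 0, f => f
  | n + 1, f => Pn π 𝒯 (n + 1) (Tnaux n f)

end DSW

-- Reopened without the section variables `[CompleteSpace K]`, `π`, `𝒯` of the definitions.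
namespace DSW

section Ultrametric

variable {E : Type*} [SeminormedAddCommGroup E] [IsUltrametricDist E]

lemma norm_sub_le_max_norm (x y : E) : ‖x - y‖ ≤ max ‖x‖ ‖y‖ := by
  simpa only [sub_eq_add_neg, norm_neg] using IsUltrametricDist.norm_add_le_max x (-y)

lemma norm_sub_le_max_norm_sub (x y z : E) : ‖x - z‖ ≤ max ‖x - y‖ ‖y - z‖ := by
  simpa only [dist_eq_norm] using IsUltrametricDist.dist_triangle_max x y z

lemma norm_sub_lt_of_tendsto_of_norm_succ_sub_lt {u : ℕ → E} {L : E}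
    (hu : Tendsto u atTop (𝓝 L)) {β : ℝ} (hβ : 0 < β) {m₀ : ℕ}
    (hstep : ∀ m ≥ m₀, ‖u (m + 1) - u m‖ < β) : ‖L - u m₀‖ < β := by
  have hchain : ∀ m ≥ m₀, ‖u m - u m₀‖ < β := by
    intro m hm
    induction m, hm using Nat.le_induction with
    | base => simpa using hβ
    | succ m hm ih =>
      exact (norm_sub_le_max_norm_sub _ (u m) _).trans_lt (max_lt (hstep m hm) ih)
  obtain ⟨N, hN⟩ := Metric.tendsto_atTop.mp hu β hβ
  have hlim : ‖L - u (max m₀ N)‖ < β := by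
    rw [norm_sub_rev, ← dist_eq_norm]
    exact hN _ (le_max_right _ _)
  exact (norm_sub_le_max_norm_sub _ _ _).trans_lt
    (max_lt hlim (hchain _ (le_max_left _ _)))

end Ultrametric

lemma norm_slope_sub_lt_iff {F : Type*} [NormedField F] (f : F → F) {x y c : F} {ε : ℝ}
    (hxy : x ≠ y) :
    ‖(f x - f y) / (x - y) - c‖ < ε ↔ ‖(f x - c * x) - (f y - c * y)‖ < ε * ‖x - y‖ := by
  have hxy' : x - y ≠ 0 := sub_ne_zero.mpr hxy
  have hslope : (f x - f y) / (x - y) - c = ((f x - c * x) - (f y - c * y)) / (x - y) := by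
    field_simp
    ring
  rw [hslope, norm_div, div_lt_iff₀ (norm_pos_iff.mpr hxy')]

variable {K : Type*} [NontriviallyNormedField K] {π : K} {𝒯 : Set K} {q : ℕ}

lemma Phi_one (f : K → K) (x y : K) : Phi f 1 ![x, y] = (f x - f y) / (x - y) := rfl

lemma mem_Rm_zero_iff {x : K} : x ∈ Rm π 𝒯 0 ↔ x = 0 := by
  constructor
  · rintro ⟨a, -, rfl⟩
    simp
  · rintro rfl
    exact ⟨Fin.elim0, fun i => i.elim0, by simp⟩

lemma mem_Rm_succ_iff {x : K} {m : ℕ} :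
    x ∈ Rm π 𝒯 (m + 1) ↔ ∃ s ∈ Rm π 𝒯 m, ∃ t ∈ 𝒯, x = s + t * π ^ m := by
  constructor
  · rintro ⟨a, ha, rfl⟩
    refine ⟨∑ i : Fin m, a i.castSucc * π ^ (i : ℕ),
      ⟨fun i => a i.castSucc, fun i => ha _, rfl⟩, a (Fin.last m), ha _, ?_⟩
    simp [Fin.sum_univ_castSucc]
  · rintro ⟨s, ⟨a, ha, rfl⟩, t, ht, rfl⟩
    refine ⟨Fin.snoc a t, fun i => ?_, by simp [Fin.sum_univ_castSucc]⟩
    induction i using Fin.lastCases with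
    | last => simpa using ht
    | cast j => simpa using ha j

lemma norm_mul_pow_le {t : K} (ht : ‖t‖ ≤ 1) (m : ℕ) : ‖t * π ^ m‖ ≤ ‖π‖ ^ m := by
  rw [norm_mul, norm_pow]
  exact mul_le_of_le_one_left (pow_nonneg (norm_nonneg _) _) ht

namespace LocalFieldData

lemma norm_pi_pos (hK : LocalFieldData π 𝒯 q) : 0 < ‖π‖ := by
  have hq : (0 : ℝ) < q := by exact_mod_cast hK.one_lt_q.pos
  rw [hK.norm_pi]
  positivity

lemma norm_pi_lt_one (hK : LocalFieldData π 𝒯 q) : ‖π‖ < 1 := by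
  rw [hK.norm_pi]
  exact inv_lt_one_of_one_lt₀ (by exact_mod_cast hK.one_lt_q)

lemma pow_le_pow_of_le (hK : LocalFieldData π 𝒯 q) {m n : ℕ} (h : m ≤ n) :
    ‖π‖ ^ n ≤ ‖π‖ ^ m :=
  pow_le_pow_of_le_one (norm_nonneg _) hK.norm_pi_lt_one.le h

lemma exists_norm_eq_pow (hK : LocalFieldData π 𝒯 q) {z : K} (hz0 : z ≠ 0) (hz : ‖z‖ ≤ 1) :
    ∃ m : ℕ, ‖z‖ = ‖π‖ ^ m := by
  obtain ⟨n, hn⟩ := hK.norm_discrete z hz0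
  have hn0 : 0 ≤ n := by
    rw [← zpow_le_zpow_iff_right_of_lt_one₀ hK.norm_pi_pos hK.norm_pi_lt_one, zpow_zero, ← hn]
    exact hz
  exact ⟨n.toNat, by rw [hn, ← zpow_natCast, Int.toNat_of_nonneg hn0]⟩

lemma norm_le_pow_succ_of_lt_pow (hK : LocalFieldData π 𝒯 q) {z : K} {m : ℕ}
    (h : ‖z‖ < ‖π‖ ^ m) : ‖z‖ ≤ ‖π‖ ^ (m + 1) := by
  rcases eq_or_ne z 0 with rfl | hz
  · simp
  obtain ⟨n, hn⟩ := hK.norm_discrete z hz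
  have hπ0 := hK.norm_pi_pos
  have hπ1 := hK.norm_pi_lt_one
  rw [hn, ← zpow_natCast] at h ⊢
  rw [zpow_lt_zpow_iff_right_of_lt_one₀ hπ0 hπ1] at h
  rw [zpow_le_zpow_iff_right_of_lt_one₀ hπ0 hπ1]
  push_cast
  omega

lemma zero_mem_Rm (hK : LocalFieldData π 𝒯 q) (m : ℕ) : (0 : K) ∈ Rm π 𝒯 m := by
  induction m with
  | zero => exact mem_Rm_zero_iff.mpr rfl
  | succ m ih => exact mem_Rm_succ_iff.mpr ⟨0, ih, 0, hK.zero_mem, by simp⟩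

lemma Rm_mono (hK : LocalFieldData π 𝒯 q) {m n : ℕ} (h : m ≤ n) : Rm π 𝒯 m ⊆ Rm π 𝒯 n := by
  induction n, h using Nat.le_induction with
  | base => exact subset_rfl
  | succ n _ ih => exact fun x hx => mem_Rm_succ_iff.mpr ⟨x, ih hx, 0, hK.zero_mem, by simp⟩

lemma exists_mem_Rm_norm_sub_le (hK : LocalFieldData π 𝒯 q) {x : K} (hx : ‖x‖ ≤ 1) (m : ℕ) :
    ∃ s ∈ Rm π 𝒯 m, ‖x - s‖ ≤ ‖π‖ ^ m := by
  induction m with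
  | zero => exact ⟨0, mem_Rm_zero_iff.mpr rfl, by simpa using hx⟩
  | succ m ih =>
    obtain ⟨s, hs, hxs⟩ := ih
    have hπm : π ^ m ≠ 0 := pow_ne_zero _ (norm_pos_iff.mp hK.norm_pi_pos)
    have hz : ‖(x - s) / π ^ m‖ ≤ 1 := by
      rw [norm_div, norm_pow]
      exact div_le_one_of_le₀ hxs (pow_nonneg (norm_nonneg _) m)
    obtain ⟨t, ⟨ht, htz⟩, -⟩ := hK.rep_unique _ hz
    refine ⟨s + t * π ^ m, mem_Rm_succ_iff.mpr ⟨s, hs, t, ht, rfl⟩, ?_⟩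
    have hrw : x - (s + t * π ^ m) = ((x - s) / π ^ m - t) * π ^ m := by
      field_simp
      ring
    rw [hrw]
    refine hK.norm_le_pow_succ_of_lt_pow ?_
    rw [norm_mul, norm_pow]
    exact mul_lt_of_lt_one_left (pow_pos hK.norm_pi_pos m) htz

lemma trunc_mem_Rm (hK : LocalFieldData π 𝒯 q) {x : K} (hx : ‖x‖ ≤ 1) (m : ℕ) :
    trunc π 𝒯 x m ∈ Rm π 𝒯 m :=
  (Classical.epsilon_spec (hK.exists_mem_Rm_norm_sub_le hx m)).1

lemma norm_sub_trunc_le (hK : LocalFieldData π 𝒯 q) {x : K} (hx : ‖x‖ ≤ 1) (m : ℕ) :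
    ‖x - trunc π 𝒯 x m‖ ≤ ‖π‖ ^ m :=
  (Classical.epsilon_spec (hK.exists_mem_Rm_norm_sub_le hx m)).2

lemma tendsto_trunc (hK : LocalFieldData π 𝒯 q) {x : K} (hx : ‖x‖ ≤ 1) :
    Tendsto (trunc π 𝒯 x) atTop (𝓝 x) := by
  rw [tendsto_iff_norm_sub_tendsto_zero]
  refine squeeze_zero (fun _ => norm_nonneg _) (fun m => ?_)
    (tendsto_pow_atTop_nhds_zero_of_lt_one (norm_nonneg π) hK.norm_pi_lt_one)
  rw [norm_sub_rev]
  exact hK.norm_sub_trunc_le hx m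

variable [IsUltrametricDist K]

lemma norm_sub_eq_one (hK : LocalFieldData π 𝒯 q) {t t' : K} (ht : t ∈ 𝒯) (ht' : t' ∈ 𝒯)
    (hne : t ≠ t') : ‖t - t'‖ = 1 := by
  refine le_antisymm ((norm_sub_le_max_norm _ _).trans
    (max_le (hK.rep_subset ht) (hK.rep_subset ht'))) (not_lt.mp fun h => hne ?_)
  obtain ⟨u, -, huniq⟩ := hK.rep_unique t (hK.rep_subset ht)
  exact (huniq t ⟨ht, by simp⟩).trans (huniq t' ⟨ht', h⟩).symm

lemma norm_eq_one (hK : LocalFieldData π 𝒯 q) {t : K} (ht : t ∈ 𝒯) (ht0 : t ≠ 0) :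
    ‖t‖ = 1 := by
  simpa using hK.norm_sub_eq_one ht hK.zero_mem ht0

lemma norm_le_one_of_mem_Rm (hK : LocalFieldData π 𝒯 q) {m : ℕ} {x : K}
    (hx : x ∈ Rm π 𝒯 m) : ‖x‖ ≤ 1 := by
  induction m generalizing x with
  | zero => simp [mem_Rm_zero_iff.mp hx]
  | succ m ih =>
    obtain ⟨s, hs, t, ht, rfl⟩ := mem_Rm_succ_iff.mp hx
    exact (IsUltrametricDist.norm_add_le_max _ _).trans (max_le (ih hs)
      ((norm_mul_pow_le (hK.rep_subset ht) m).trans (pow_le_one₀ (norm_nonneg _)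
        hK.norm_pi_lt_one.le)))

/-- Distinct elements of `ℛₘ` differ in a digit of index `< m`, which is a unit. -/
lemma eq_of_mem_Rm (hK : LocalFieldData π 𝒯 q) {m : ℕ} {s s' : K} (hs : s ∈ Rm π 𝒯 m)
    (hs' : s' ∈ Rm π 𝒯 m) (h : ‖s - s'‖ ≤ ‖π‖ ^ m) : s = s' := by
  induction m generalizing s s' with
  | zero => rw [mem_Rm_zero_iff.mp hs, mem_Rm_zero_iff.mp hs']
  | succ m ih =>
    obtain ⟨y, hy, t, ht, rfl⟩ := mem_Rm_succ_iff.mp hs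
    obtain ⟨y', hy', t', ht', rfl⟩ := mem_Rm_succ_iff.mp hs'
    have htt : ‖t - t'‖ ≤ 1 :=
      (norm_sub_le_max_norm _ _).trans (max_le (hK.rep_subset ht) (hK.rep_subset ht'))
    obtain rfl : y = y' := by
      refine ih hy hy' ?_
      have : y - y' = ((y + t * π ^ m) - (y' + t' * π ^ m)) - (t - t') * π ^ m := by ring
      rw [this]
      exact (norm_sub_le_max_norm _ _).trans (max_le (h.trans (hK.pow_le_pow_of_le m.le_succ))
        (norm_mul_pow_le htt m))
    by_contra hne
    have htne : t ≠ t' := fun htt' => hne (by rw [htt'])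
    rw [add_sub_add_left_eq_sub, ← sub_mul, norm_mul, norm_pow, hK.norm_sub_eq_one ht ht' htne, one_mul,
      pow_succ] at h
    nlinarith [pow_pos hK.norm_pi_pos m, hK.norm_pi_lt_one]

lemma trunc_eq (hK : LocalFieldData π 𝒯 q) {x s : K} (hx : ‖x‖ ≤ 1) {m : ℕ}
    (hs : s ∈ Rm π 𝒯 m) (h : ‖x - s‖ ≤ ‖π‖ ^ m) : trunc π 𝒯 x m = s :=
  hK.eq_of_mem_Rm (hK.trunc_mem_Rm hx m) hs <| (norm_sub_le_max_norm_sub _ x _).trans <|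
    max_le (by rw [norm_sub_rev]; exact hK.norm_sub_trunc_le hx m) h

lemma trunc_eq_trunc (hK : LocalFieldData π 𝒯 q) {x y : K} (hx : ‖x‖ ≤ 1) (hy : ‖y‖ ≤ 1)
    {m : ℕ} (h : ‖x - y‖ ≤ ‖π‖ ^ m) : trunc π 𝒯 x m = trunc π 𝒯 y m :=
  hK.trunc_eq hx (hK.trunc_mem_Rm hy m) <|
    (norm_sub_le_max_norm_sub x y _).trans (max_le h (hK.norm_sub_trunc_le hy m))

lemma norm_trunc_sub_lt (hK : LocalFieldData π 𝒯 q) {z a : K} (hz : ‖z‖ ≤ 1) {δ : ℝ}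
    (hza : ‖z - a‖ < δ) {m : ℕ} (hm : ‖π‖ ^ m < δ) : ‖trunc π 𝒯 z m - a‖ < δ := by
  refine (norm_sub_le_max_norm_sub _ z a).trans_lt (max_lt ?_ hza)
  rw [norm_sub_rev]
  exact (hK.norm_sub_trunc_le hz m).trans_lt hm

lemma norm_trunc_succ_sub_trunc_le (hK : LocalFieldData π 𝒯 q) {z : K} (hz : ‖z‖ ≤ 1)
    (m : ℕ) : ‖trunc π 𝒯 z (m + 1) - trunc π 𝒯 z m‖ ≤ ‖π‖ ^ m := by
  refine (norm_sub_le_max_norm_sub _ z _).trans (max_le ?_ (hK.norm_sub_trunc_le hz m))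
  rw [norm_sub_rev]
  exact (hK.norm_sub_trunc_le hz (m + 1)).trans (hK.pow_le_pow_of_le m.le_succ)

lemma norm_add_mul_pow_sub (hK : LocalFieldData π 𝒯 q) {t : K} (ht : t ∈ 𝒯) (ht0 : t ≠ 0)
    (s : K) (k : ℕ) : ‖s + t * π ^ k - s‖ = ‖π‖ ^ k := by
  rw [add_sub_cancel_left, norm_mul, norm_pow, hK.norm_eq_one ht ht0, one_mul]

lemma add_mul_pow_notMem_Rm (hK : LocalFieldData π 𝒯 q) {s t : K} {k : ℕ}
    (hs : s ∈ Rm π 𝒯 k) (ht : t ∈ 𝒯) (ht0 : t ≠ 0) : s + t * π ^ k ∉ Rm π 𝒯 k := by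
  intro hr
  have hnorm := hK.norm_add_mul_pow_sub ht ht0 s k
  rw [hK.eq_of_mem_Rm hr hs hnorm.le, sub_self, norm_zero] at hnorm
  exact (pow_pos hK.norm_pi_pos k).ne hnorm

lemma len_add_mul_pow (hK : LocalFieldData π 𝒯 q) {s t : K} {k : ℕ}
    (hs : s ∈ Rm π 𝒯 k) (ht : t ∈ 𝒯) (ht0 : t ≠ 0) : len π 𝒯 (s + t * π ^ k) = k + 1 := by
  have hr : s + t * π ^ k ∈ Rm π 𝒯 (k + 1) := mem_Rm_succ_iff.mpr ⟨s, hs, t, ht, rfl⟩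
  refine le_antisymm (Nat.sInf_le hr) (le_csInf ⟨k + 1, hr⟩ fun m hm => ?_)
  by_contra! hmk
  exact hK.add_mul_pow_notMem_Rm hs ht ht0 (hK.Rm_mono (Nat.lt_succ_iff.mp hmk) hm)

lemma add_mul_pow_mem_RPlus (hK : LocalFieldData π 𝒯 q) {s t : K} {k : ℕ}
    (hs : s ∈ Rm π 𝒯 k) (ht : t ∈ 𝒯) (ht0 : t ≠ 0) : s + t * π ^ k ∈ RPlus π 𝒯 := by
  refine ⟨Set.mem_iUnion.mpr ⟨k + 1, mem_Rm_succ_iff.mpr ⟨s, hs, t, ht, rfl⟩⟩, fun h0 => ?_⟩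
  rw [Set.mem_singleton_iff] at h0
  exact hK.add_mul_pow_notMem_Rm hs ht ht0 (h0 ▸ hK.zero_mem_Rm k)

lemma rminus_add_mul_pow (hK : LocalFieldData π 𝒯 q) {s t : K} {k : ℕ}
    (hs : s ∈ Rm π 𝒯 k) (ht : t ∈ 𝒯) (ht0 : t ≠ 0) : rminus π 𝒯 (s + t * π ^ k) = s := by
  rw [rminus, hK.len_add_mul_pow hs ht ht0, Nat.add_sub_cancel]
  exact hK.trunc_eq (hK.norm_le_one_of_mem_Rm (mem_Rm_succ_iff.mpr ⟨s, hs, t, ht, rfl⟩)) hs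
    (hK.norm_add_mul_pow_sub ht ht0 s k).le

lemma trunc_succ_mem_RPlus (hK : LocalFieldData π 𝒯 q) {z : K} (hz : ‖z‖ ≤ 1) {m : ℕ}
    (hne : trunc π 𝒯 z (m + 1) ≠ trunc π 𝒯 z m) :
    trunc π 𝒯 z (m + 1) ∈ RPlus π 𝒯 ∧ rminus π 𝒯 (trunc π 𝒯 z (m + 1)) = trunc π 𝒯 z m := by
  obtain ⟨s, hs, t, ht, hst⟩ := mem_Rm_succ_iff.mp (hK.trunc_mem_Rm hz (m + 1))
  have hzs : trunc π 𝒯 z m = s := by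
    refine hK.trunc_eq hz hs ((norm_sub_le_max_norm_sub _ (trunc π 𝒯 z (m + 1)) _).trans
      (max_le ((hK.norm_sub_trunc_le hz _).trans (hK.pow_le_pow_of_le m.le_succ)) ?_))
    rw [hst, add_sub_cancel_left]
    exact norm_mul_pow_le (hK.rep_subset ht) m
  have ht0 : t ≠ 0 := by
    rintro rfl
    exact hne (by rw [hst, hzs, zero_mul, add_zero])
  rw [hst, hzs]
  exact ⟨hK.add_mul_pow_mem_RPlus hs ht ht0, hK.rminus_add_mul_pow hs ht ht0⟩

lemma norm_sub_trunc_succ_lt (hK : LocalFieldData π 𝒯 q) {f : K → K} {a c : K} {δ ε : ℝ}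
    (hε : 0 < ε) (H : ∀ r ∈ RPlus π 𝒯, ‖r - a‖ < δ → ‖rminus π 𝒯 r - a‖ < δ →
      ‖Phi f 1 ![r, rminus π 𝒯 r] - c‖ < ε)
    {z : K} (hz : ‖z‖ ≤ 1) (hza : ‖z - a‖ < δ) {m : ℕ} (hm : ‖π‖ ^ m < δ) :
    ‖(f (trunc π 𝒯 z (m + 1)) - c * trunc π 𝒯 z (m + 1)) -
      (f (trunc π 𝒯 z m) - c * trunc π 𝒯 z m)‖ < ε * ‖π‖ ^ m := by
  by_cases heq : trunc π 𝒯 z (m + 1) = trunc π 𝒯 z m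
  · rw [heq, sub_self, norm_zero]
    exact mul_pos hε (pow_pos hK.norm_pi_pos m)
  obtain ⟨hr, hrm⟩ := hK.trunc_succ_mem_RPlus hz heq
  have hslope := H _ hr
    (hK.norm_trunc_sub_lt hz hza ((hK.pow_le_pow_of_le m.le_succ).trans_lt hm))
    (hrm ▸ hK.norm_trunc_sub_lt hz hza hm)
  rw [Phi_one, hrm, norm_slope_sub_lt_iff f heq] at hslope
  exact hslope.trans_le (mul_le_mul_of_nonneg_left (hK.norm_trunc_succ_sub_trunc_le hz m) hε.le)

lemma norm_sub_trunc_lt (hK : LocalFieldData π 𝒯 q) {f : K → K} (hf : ContinuousOn f (Rint K))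
    {a c : K} {δ ε : ℝ} (hε : 0 < ε) (H : ∀ r ∈ RPlus π 𝒯, ‖r - a‖ < δ →
      ‖rminus π 𝒯 r - a‖ < δ → ‖Phi f 1 ![r, rminus π 𝒯 r] - c‖ < ε)
    {z : K} (hz : ‖z‖ ≤ 1) (hza : ‖z - a‖ < δ) {m₀ : ℕ} (hm₀ : ‖π‖ ^ m₀ < δ) :
    ‖(f z - c * z) - (f (trunc π 𝒯 z m₀) - c * trunc π 𝒯 z m₀)‖ < ε * ‖π‖ ^ m₀ := by
  have hg : ContinuousOn (fun w => f w - c * w) (Rint K) :=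
    hf.sub (continuousOn_const.mul continuousOn_id)
  have htrunc : Tendsto (trunc π 𝒯 z) atTop (𝓝[Rint K] z) :=
    tendsto_nhdsWithin_iff.mpr ⟨hK.tendsto_trunc hz,
      Eventually.of_forall fun m => hK.norm_le_one_of_mem_Rm (hK.trunc_mem_Rm hz m)⟩
  refine norm_sub_lt_of_tendsto_of_norm_succ_sub_lt ((hg z hz).tendsto.comp htrunc)
    (mul_pos hε (pow_pos hK.norm_pi_pos m₀)) fun m hm => ?_
  have hmδ := (hK.pow_le_pow_of_le hm).trans_lt hm₀
  exact (hK.norm_sub_trunc_succ_lt hε H hz hza hmδ).trans_le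
    (mul_le_mul_of_nonneg_left (hK.pow_le_pow_of_le hm) hε.le)

end LocalFieldData

variable [CompleteSpace K] [IsUltrametricDist K]

theorem statement_6_general (π : K) (𝒯 : Set K) (q : ℕ) (hK : LocalFieldData π 𝒯 q)
    (f : K → K) (hf : ContinuousOn f (Rint K))
    (a : K) (δ : ℝ) (c : K) (ε : ℝ) (hε : 0 < ε)
    (H : ∀ r ∈ RPlus π 𝒯, ‖r - a‖ < δ → ‖rminus π 𝒯 r - a‖ < δ →
      ‖Phi f 1 ![r, rminus π 𝒯 r] - c‖ < ε) :
    ∀ x ∈ Rint K, ∀ y ∈ Rint K, x ≠ y → ‖x - a‖ < δ → ‖y - a‖ < δ →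
      ‖Phi f 1 ![x, y] - c‖ < ε := by
  intro x hx y hy hxy hxa hya
  obtain ⟨m₀, hm₀⟩ := hK.exists_norm_eq_pow (sub_ne_zero.mpr hxy)
    ((norm_sub_le_max_norm x y).trans (max_le hx hy))
  have hm₀δ : ‖π‖ ^ m₀ < δ := by
    rw [← hm₀]
    exact (norm_sub_le_max_norm_sub x a y).trans_lt (max_lt hxa (by rwa [norm_sub_rev]))
  have hx₀ := hK.norm_sub_trunc_lt hf hε H hx hxa hm₀δ
  have hy₀ := hK.norm_sub_trunc_lt hf hε H hy hya hm₀δ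
  rw [hK.trunc_eq_trunc hx hy hm₀.le] at hx₀
  rw [norm_sub_rev] at hy₀
  rw [Phi_one, norm_slope_sub_lt_iff f hxy, hm₀]
  exact (norm_sub_le_max_norm_sub _ _ _).trans_lt (max_lt hx₀ hy₀)

/-- Key lemma: if `Φ₁f(r, r₋)` lies in the ball `S = {z : ‖z − c‖ < ε}` for every `r ∈ ℛ₊`
with `r, r₋` in the ball `B = {x ∈ R : ‖x − a‖ < δ}`, then `Φ₁f(x, y) ∈ S` for all distinct
`x, y ∈ B`. -/
theorem statement_6 (π : K) (𝒯 : Set K) (q : ℕ) (hK : LocalFieldData π 𝒯 q)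
    (f : K → K) (hf : ContinuousOn f (Rint K))
    (a : K) (ha : a ∈ Rint K) (δ : ℝ) (hδ : 0 < δ) (c : K) (ε : ℝ) (hε : 0 < ε)
    (H : ∀ r ∈ RPlus π 𝒯, ‖r - a‖ < δ → ‖rminus π 𝒯 r - a‖ < δ →
      ‖Phi f 1 ![r, rminus π 𝒯 r] - c‖ < ε) :
    ∀ x ∈ Rint K, ∀ y ∈ Rint K, x ≠ y → ‖x - a‖ < δ → ‖y - a‖ < δ →
      ‖Phi f 1 ![x, y] - c‖ < ε :=
  statement_6_general π 𝒯 q hK f hf a δ c ε hε H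

end DSW
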